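/- arXiv:1609.09797 — 7 statements merged into one kernel-verified Lean document; each statement's English description precedes it below -/
import Mathlib

section
/- Let 𝒢 be a connected graph with vertex set V. For any two vertices x, y, the quotient norm of δ_y − δ_x, i.e., the infimum of ‖c‖₁ over all finitely supported chains c on the edge set with ∂c = δ_y − δ_x, equals the graph distance d(x,y). -/
/-- The boundary operator, sending the oriented edge `(x,y)` to `δ_y - δ_x`. -/
noncomputable def bndFull {V : Type*} (c : (V × V) →₀ ℝ) : V →₀ ℝ :=
  c.sum fun e a => Finsupp.single e.2 a - Finsupp.single e.1 a

lemma bndFull_add {V : Type*} (c d : (V × V) →₀ ℝ) :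
    bndFull (c + d) = bndFull c + bndFull d := by
  unfold bndFull
  refine Finsupp.sum_add_index' (by simp) ?_
  intro e b₁ b₂
  simp [Finsupp.single_add]
  abel

lemma bndFull_single {V : Type*} (e : V × V) (a : ℝ) :
    bndFull (Finsupp.single e a) = Finsupp.single e.2 a - Finsupp.single e.1 a := by
  unfold bndFull
  exact Finsupp.sum_single_index (by simp)

lemma l1_add_le {α : Type*} (c d : α →₀ ℝ) :
    ((c + d).sum fun _ a => |a|) ≤ (c.sum fun _ a => |a|) + (d.sum fun _ a => |a|) := by
  classical
  rw [Finsupp.sum_of_support_subset (c + d) Finsupp.support_add (fun _ a => |a|) (by simp),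
    Finsupp.sum_of_support_subset c (Finset.subset_union_left (s₂ := d.support))
      (fun _ a => |a|) (by simp),
    Finsupp.sum_of_support_subset d (Finset.subset_union_right (s₁ := c.support))
      (fun _ a => |a|) (by simp), ← Finset.sum_add_distrib]
  exact Finset.sum_le_sum fun e _ => by simpa using abs_add_le (c e) (d e)

lemma walk_chain {V : Type*} (Γ : SimpleGraph V) {x y : V} (p : Γ.Walk x y) :
    ∃ c : (V × V) →₀ ℝ, (∀ e ∈ c.support, Γ.Adj e.1 e.2) ∧
      bndFull c = Finsupp.single y 1 - Finsupp.single x 1 ∧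
      (c.sum fun _ a => |a|) ≤ p.length := by
  classical
  induction p with
  | nil =>
      refine ⟨0, by simp, ?_, by simp⟩
      unfold bndFull; simp
  | @cons x u y h p ih =>
      obtain ⟨c, hadj, hb, hn⟩ := ih
      refine ⟨Finsupp.single (x, u) 1 + c, ?_, ?_, ?_⟩
      · intro e he
        rcases Finset.mem_union.1 (Finsupp.support_add he) with h1 | h2
        · have : e = (x, u) := Finset.mem_singleton.1 (Finsupp.support_single_subset h1)
          subst this; exact h
        · exact hadj e h2
      · rw [bndFull_add, bndFull_single, hb]
        abel
      · calc ((Finsupp.single (x, u) 1 + c).sum fun _ a => |a|)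
            ≤ ((Finsupp.single (x, u) (1:ℝ)).sum fun _ a => |a|) +
              (c.sum fun _ a => |a|) := l1_add_le _ _
          _ ≤ 1 + p.length := by
              gcongr
              rw [Finsupp.sum_single_index (by simp)]
              simp
          _ = (p.cons h).length := by simp [SimpleGraph.Walk.length_cons]; ring

lemma pairing_bndFull {V : Type*} (f : V → ℝ) (c : (V × V) →₀ ℝ) :
    Finsupp.linearCombination ℝ f (bndFull c) = c.sum fun e a => a * (f e.2 - f e.1) := by
  unfold bndFull
  rw [map_finsuppSum]
  refine Finsupp.sum_congr fun e _ => ?_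
  rw [map_sub, Finsupp.linearCombination_single, Finsupp.linearCombination_single]
  simp [smul_eq_mul]
  ring

/-- The quotient (image) norm of `δ_y - δ_x`, i.e. the infimum of the ℓ¹ norms
of chains with boundary `δ_y - δ_x`, equals the graph distance `d(x,y)`. -/
theorem stmt2 {V : Type*} (Γ : SimpleGraph V) (hconn : Γ.Connected) (x y : V) :
    sInf {r : ℝ | ∃ c : (V × V) →₀ ℝ, (∀ e ∈ c.support, Γ.Adj e.1 e.2) ∧
        bndFull c = Finsupp.single y 1 - Finsupp.single x 1 ∧
        r = c.sum fun _ a => |a|} = Γ.dist x y := by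
  classical
  set S := {r : ℝ | ∃ c : (V × V) →₀ ℝ, (∀ e ∈ c.support, Γ.Adj e.1 e.2) ∧
      bndFull c = Finsupp.single y 1 - Finsupp.single x 1 ∧
      r = c.sum fun _ a => |a|} with hS
  -- lower bound: every element of S is ≥ dist x y
  have hlb : ∀ r ∈ S, (Γ.dist x y : ℝ) ≤ r := by
    rintro r ⟨c, hadj, hb, hr⟩
    set f : V → ℝ := fun v => (Γ.dist x v : ℝ) with hf
    have key : Finsupp.linearCombination ℝ f (bndFull c) = f y - f x := by
      rw [hb, map_sub, Finsupp.linearCombination_single, Finsupp.linearCombination_single]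
      simp
    rw [pairing_bndFull] at key
    have hfx : f x = 0 := by simp [hf]
    have hlip : ∀ e ∈ c.support, |f e.2 - f e.1| ≤ 1 := by
      intro e he
      have hadje := hadj e he
      have h1 : Γ.dist e.1 e.2 ≤ 1 := by
        have := Γ.dist_le hadje.toWalk
        simpa using this
      have h2 : Γ.dist e.2 e.1 ≤ 1 := by rw [SimpleGraph.dist_comm]; exact h1
      have t1 : Γ.dist x e.2 ≤ Γ.dist x e.1 + 1 :=
        le_trans (hconn.dist_triangle (v := e.1)) (by omega)
      have t2 : Γ.dist x e.1 ≤ Γ.dist x e.2 + 1 :=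
        le_trans (hconn.dist_triangle (v := e.2)) (by omega)
      have t1' : (Γ.dist x e.2 : ℝ) ≤ (Γ.dist x e.1 : ℝ) + 1 := by exact_mod_cast t1
      have t2' : (Γ.dist x e.1 : ℝ) ≤ (Γ.dist x e.2 : ℝ) + 1 := by exact_mod_cast t2
      rw [abs_sub_le_iff]
      constructor <;> simp [hf] <;> linarith
    have : (Γ.dist x y : ℝ) = c.sum fun e a => a * (f e.2 - f e.1) := by
      rw [key, hfx, hf]; simp
    rw [this, hr]
    refine Finset.sum_le_sum fun e he => ?_
    calc c e * (f e.2 - f e.1) ≤ |c e * (f e.2 - f e.1)| := le_abs_self _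
      _ = |c e| * |f e.2 - f e.1| := abs_mul _ _
      _ ≤ |c e| * 1 := mul_le_mul_of_nonneg_left (hlip e he) (abs_nonneg _)
      _ = |c e| := mul_one _
  -- upper bound: a shortest path gives an element of S of value ≤ dist
  obtain ⟨p, hp⟩ := (hconn x y).exists_walk_length_eq_dist
  obtain ⟨c, hadj, hb, hn⟩ := walk_chain Γ p
  have hmem : (c.sum fun _ a => |a|) ∈ S := ⟨c, hadj, hb, rfl⟩
  have hle : (c.sum fun _ a => |a|) ≤ (Γ.dist x y : ℝ) := by
    rw [← hp]; exact_mod_cast hn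
  exact le_antisymm (csInf_le_of_le ⟨(Γ.dist x y : ℝ), hlb⟩ hmem hle)
    (le_csInf ⟨_, hmem⟩ hlb)
end

section
/- (Nesting of geodesics) Let (X,d) be a δ-hyperbolic metric space (four-point condition: d(a,c)+d(b,d) ≤ max(d(a,d)+d(b,c), d(a,b)+d(c,d)) + δ for all a,b,c,d). Let a,b,c,d ∈ X with b ∈ η₁-géod(a,c), c ∈ η₂-géod(b,d), and d(b,c) > (η₁+η₂+δ)/2. Then b ∈ (η₁+δ)-géod(a,d) and c ∈ (η₂+δ)-géod(a,d). -/
/-- Nesting of geodesics (Lemme 2.4). -/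
theorem stmt4 {X : Type*} [MetricSpace X] (δ : ℝ)
    (hδ : ∀ a b c d : X,
      dist a c + dist b d ≤ max (dist a d + dist b c) (dist a b + dist c d) + δ)
    (η₁ η₂ : ℝ) (hη₁ : 0 ≤ η₁) (hη₂ : 0 ≤ η₂)
    (a b c d : X)
    (hb : dist a b + dist b c ≤ dist a c + η₁)
    (hc : dist b c + dist c d ≤ dist b d + η₂)
    (hbc : (η₁ + η₂ + δ) / 2 < dist b c) :
    dist a b + dist b d ≤ dist a d + (η₁ + δ) ∧
      dist a c + dist c d ≤ dist a d + (η₂ + δ) := by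
  have h := hδ a b c d
  rcases le_or_gt (dist a b + dist c d) (dist a d + dist b c) with hm | hm
  · rw [max_eq_left hm] at h
    constructor <;> linarith
  · rw [max_eq_right hm.le] at h
    linarith
end

section
/- Let (X,d) be a metric space, t ∈ X, ε > 0, C > 1, and d_t : X × X → ℝ a function satisfying the triangle inequality with (1/C)·e^{−ε(x,y)_t} ≤ d_t(x,y) ≤ C·e^{−ε(x,y)_t} for all x,y. Then for any chain of points x_0, …, x_n with d(x_i, x_{i+1}) = 1 and any η ≥ 0 with t ∈ η-géod(x_0, x_n), one has ∑_{i=0}^{n−1} e^{−ε·d(x_i,t)} ≥ e^{−ε(η/2+1)}/C². -/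
/-!
The points `p 0` and `p n` have Gromov product at most `η / 2` seen from `t`, so the lower visual
bound makes `d_t (p 0) (p n)` at least `e^{-εη/2} / C`. The triangle inequality for `d_t` along
the path bounds it above by the sum of the `d_t (p i) (p (i+1))`, and since consecutive points are
at distance one, `(p i, p (i+1))_t ≥ d(p i, t) - 1`, so the upper visual bound gives
`d_t (p i) (p (i+1)) ≤ C e^ε e^{-ε d(p i, t)}`.
-/

open Finset Real

noncomputable def gromovProduct {X : Type*} [PseudoMetricSpace X] (t x y : X) : ℝ :=
  (dist x t + dist y t - dist x y) / 2

section GromovProduct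

variable {X : Type*} [PseudoMetricSpace X]

theorem sub_dist_le_gromovProduct (t x y : X) : dist x t - dist x y ≤ gromovProduct t x y := by
  unfold gromovProduct
  linarith [dist_triangle x y t]

theorem gromovProduct_le_of_dist_add_dist_le {t x y : X} {η : ℝ}
    (h : dist x t + dist t y ≤ dist x y + η) : gromovProduct t x y ≤ η / 2 := by
  unfold gromovProduct
  linarith [dist_comm t y]

theorem exp_neg_mul_gromovProduct_le {ε : ℝ} (hε : 0 ≤ ε) (t x y : X) :
    exp (-ε * gromovProduct t x y) ≤ exp (ε * dist x y) * exp (-ε * dist x t) := by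
  rw [← exp_add, exp_le_exp]
  nlinarith [sub_dist_le_gromovProduct t x y]

end GromovProduct

theorem le_sum_range_of_triangle {α : Type*} {f : α → α → ℝ}
    (htri : ∀ x y z, f x z ≤ f x y + f y z) (p : ℕ → α) {n : ℕ} (hn : 1 ≤ n) :
    f (p 0) (p n) ≤ ∑ i ∈ range n, f (p i) (p (i + 1)) := by
  induction n, hn using Nat.le_induction with
  | base => simp
  | succ k _ ih =>
    rw [sum_range_succ]
    linarith [htri (p 0) (p k) (p (k + 1))]

theorem stmt6_general {X : Type*} [MetricSpace X] (t : X) (ε C : ℝ)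
    (hε : 0 < ε) (hC : 1 < C)
    (dt : X → X → ℝ)
    (htri : ∀ x y z : X, dt x z ≤ dt x y + dt y z)
    (hlow : ∀ x y : X,
      (1 / C) * Real.exp (-ε * ((dist x t + dist y t - dist x y) / 2)) ≤ dt x y)
    (hhigh : ∀ x y : X,
      dt x y ≤ C * Real.exp (-ε * ((dist x t + dist y t - dist x y) / 2)))
    (n : ℕ) (hn : 1 ≤ n) (p : ℕ → X)
    (hpath : ∀ i < n, dist (p i) (p (i + 1)) = 1)
    (η : ℝ)
    (ht : dist (p 0) t + dist t (p n) ≤ dist (p 0) (p n) + η) :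
    Real.exp (-ε * (η / 2 + 1)) / C ^ 2 ≤
      ∑ i ∈ Finset.range n, Real.exp (-ε * dist (p i) t) := by
  have hC0 : 0 < C := one_pos.trans hC
  set S := ∑ i ∈ range n, exp (-ε * dist (p i) t)
  have hupper : dt (p 0) (p n) ≤ C * exp ε * S :=
    calc dt (p 0) (p n) ≤ ∑ i ∈ range n, dt (p i) (p (i + 1)) := le_sum_range_of_triangle htri p hn
      _ ≤ ∑ i ∈ range n, C * exp ε * exp (-ε * dist (p i) t) := by
        refine sum_le_sum fun i hi => (hhigh _ _).trans ?_
        have h := exp_neg_mul_gromovProduct_le hε.le t (p i) (p (i + 1))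
        rw [hpath i (mem_range.1 hi), mul_one] at h
        rw [mul_assoc]
        exact mul_le_mul_of_nonneg_left h hC0.le
      _ = C * exp ε * S := (mul_sum _ _ _).symm
  have hlower : exp (-ε * (η / 2)) / C ≤ dt (p 0) (p n) :=
    calc exp (-ε * (η / 2)) / C ≤ 1 / C * exp (-ε * gromovProduct t (p 0) (p n)) := by
          rw [one_div_mul_eq_div]
          refine div_le_div_of_nonneg_right (exp_le_exp.2 ?_) hC0.le
          nlinarith [gromovProduct_le_of_dist_add_dist_le ht]
      _ ≤ dt (p 0) (p n) := hlow _ _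
  calc exp (-ε * (η / 2 + 1)) / C ^ 2 = exp (-ε * (η / 2)) / C / (C * exp ε) := by
        rw [show -ε * (η / 2 + 1) = -ε * (η / 2) + -ε by ring, exp_add, exp_neg]
        field_simp
    _ ≤ dt (p 0) (p n) / (C * exp ε) := by gcongr
    _ ≤ S := by rwa [div_le_iff₀ (by positivity), mul_comm]

/-- Lemme 2.5: lower bound on the exponential path sum via a visual metric. -/
theorem stmt6 {X : Type*} [MetricSpace X] (t : X) (ε C : ℝ)
    (hε : 0 < ε) (hC : 1 < C)
    (dt : X → X → ℝ)
    (htri : ∀ x y z : X, dt x z ≤ dt x y + dt y z)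
    (hlow : ∀ x y : X,
      (1 / C) * Real.exp (-ε * ((dist x t + dist y t - dist x y) / 2)) ≤ dt x y)
    (hhigh : ∀ x y : X,
      dt x y ≤ C * Real.exp (-ε * ((dist x t + dist y t - dist x y) / 2)))
    (n : ℕ) (hn : 1 ≤ n) (p : ℕ → X)
    (hpath : ∀ i < n, dist (p i) (p (i + 1)) = 1)
    (η : ℝ) (hη : 0 ≤ η)
    (ht : dist (p 0) t + dist t (p n) ≤ dist (p 0) (p n) + η) :
    Real.exp (-ε * (η / 2 + 1)) / C ^ 2 ≤
      ∑ i ∈ Finset.range n, Real.exp (-ε * dist (p i) t) :=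
  stmt6_general t ε C hε hC dt htri hlow hhigh n hn p hpath η ht
end

section
/- Let 𝒢 be a graph and c a nonzero chain with boundary δ_y − δ_x (x ≠ y). For every vertex z ∉ {x, y}, the sum of coefficients c(e) over edges e with positive coefficient and terminal vertex z equals the sum of coefficients c(e) over edges e with positive coefficient and origin z (Kirchhoff's node law). In particular, if some edge with positive coefficient terminates at z ∉ {x,y}, then some edge with positive coefficient originates at z. -/
open scoped Classical

/-- The boundary of an antisymmetric chain: `∂c(v) = ∑_u c(u,v)`. -/
noncomputable def bnd {V : Type*} (c : (V × V) →₀ ℝ) : V →₀ ℝ :=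
  c.sum fun e a => Finsupp.single e.2 a

/-!
Antisymmetry pairs every edge of nonpositive coefficient entering `z` with an edge of positive
coefficient leaving `z`, of opposite coefficient. Hence `∂c(z)` is the inflow of `𝒮_c` at `z` minus
its outflow, and it vanishes off `{x, y}`. A positive edge entering `z` makes the inflow positive,
so the outflow is positive too and `𝒮_c` has an edge leaving `z`.
-/

namespace Finset

theorem nonempty_of_sum_eq_of_pos {ι M : Type*} [AddCommMonoid M] [PartialOrder M]
    [IsOrderedCancelAddMonoid M] {s t : Finset ι} {f : ι → M}
    (hf : ∀ i ∈ s, 0 < f i) (hs : s.Nonempty) (hst : ∑ i ∈ s, f i = ∑ i ∈ t, f i) :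
    t.Nonempty :=
  nonempty_of_sum_ne_zero (hst ▸ (sum_pos hf hs).ne')

end Finset

namespace Chain

variable {V : Type*} (c : (V × V) →₀ ℝ)

theorem bnd_apply (v : V) : bnd c v = ∑ e ∈ c.support with e.2 = v, c e := by
  simp only [bnd, Finsupp.sum, Finsupp.finsetSum_apply, Finsupp.single_apply, Finset.sum_filter]

variable {c}

theorem sum_nonpos_in_eq_neg_sum_pos_out (hanti : ∀ u v : V, c (u, v) = -c (v, u)) (v : V) :
    ∑ e ∈ c.support with ¬ 0 < c e ∧ e.2 = v, c e =
      -∑ e ∈ c.support with 0 < c e ∧ e.1 = v, c e := by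
  have hswap (e : V × V) : c e.swap = -c e := hanti e.2 e.1
  rw [← Finset.sum_neg_distrib]
  refine Finset.sum_nbij' Prod.swap Prod.swap ?_ ?_ (fun e _ ↦ e.swap_swap) (fun e _ ↦ e.swap_swap)
    (fun e _ ↦ by rw [hswap, neg_neg])
  all_goals
    intro e he
    simp only [Finset.mem_filter, Finsupp.mem_support_iff, hswap,
      Prod.fst_swap, Prod.snd_swap] at he ⊢
  · exact ⟨neg_ne_zero.2 he.1, neg_pos.2 (lt_of_le_of_ne (not_lt.1 he.2.1) he.1), he.2.2⟩
  · exact ⟨neg_ne_zero.2 he.1, not_lt.2 (neg_nonpos.2 he.2.1.le), he.2.2⟩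

theorem bnd_apply_eq_sum_pos_in_sub_sum_pos_out (hanti : ∀ u v : V, c (u, v) = -c (v, u))
    (v : V) :
    bnd c v = ∑ e ∈ c.support with 0 < c e ∧ e.2 = v, c e -
      ∑ e ∈ c.support with 0 < c e ∧ e.1 = v, c e := by
  rw [bnd_apply, sub_eq_add_neg, ← sum_nonpos_in_eq_neg_sum_pos_out hanti,
    ← Finset.sum_filter_add_sum_filter_not _ (fun e ↦ 0 < c e)]
  simp only [Finset.filter_filter, and_comm]

end Chain

theorem stmt10_general {V : Type*} (x y : V)
    (c : (V × V) →₀ ℝ)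
    (hanti : ∀ u v : V, c (u, v) = -c (v, u))
    (hbnd : bnd c = Finsupp.single y 1 - Finsupp.single x 1)
    (z : V) (hzx : z ≠ x) (hzy : z ≠ y) :
    (∑ e ∈ c.support.filter fun e => 0 < c e ∧ e.2 = z, c e) =
      (∑ e ∈ c.support.filter fun e => 0 < c e ∧ e.1 = z, c e) ∧
    ((∃ e ∈ c.support, 0 < c e ∧ e.2 = z) →
      ∃ e ∈ c.support, 0 < c e ∧ e.1 = z) := by
  have hz : bnd c z = 0 := by simp [hbnd, hzx.symm, hzy.symm]
  have hlaw := sub_eq_zero.1 (Chain.bnd_apply_eq_sum_pos_in_sub_sum_pos_out hanti z ▸ hz)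
  refine ⟨hlaw, fun ⟨e, he, hpos, hez⟩ ↦ ?_⟩
  obtain ⟨f, hf⟩ := Finset.nonempty_of_sum_eq_of_pos (fun e he ↦ (Finset.mem_filter.1 he).2.1)
    ⟨e, Finset.mem_filter.2 ⟨he, hpos, hez⟩⟩ hlaw
  exact ⟨f, (Finset.mem_filter.1 hf).1, (Finset.mem_filter.1 hf).2⟩

/-- Kirchhoff's node law for the directed graph `𝒮_c` of edges with positive
coefficient of a nonzero chain with boundary `δ_y - δ_x`: at every vertex
`z ∉ {x,y}`, incoming and outgoing coefficients balance; in particular an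
incoming positive edge at `z` forces an outgoing positive edge at `z`. -/
theorem stmt10 {V : Type*} (Γ : SimpleGraph V) (x y : V) (hxy : x ≠ y)
    (c : (V × V) →₀ ℝ) (hc : c ≠ 0)
    (hanti : ∀ u v : V, c (u, v) = -c (v, u))
    (hsupp : ∀ e ∈ c.support, Γ.Adj e.1 e.2)
    (hbnd : bnd c = Finsupp.single y 1 - Finsupp.single x 1)
    (z : V) (hzx : z ≠ x) (hzy : z ≠ y) :
    (∑ e ∈ c.support.filter fun e => 0 < c e ∧ e.2 = z, c e) =
      (∑ e ∈ c.support.filter fun e => 0 < c e ∧ e.1 = z, c e) ∧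
    ((∃ e ∈ c.support, 0 < c e ∧ e.2 = z) →
      ∃ e ∈ c.support, 0 < c e ∧ e.1 = z) :=
  stmt10_general x y c hanti hbnd z hzx hzy
end

section
/- Let (X,d) be a uniformly locally finite hyperbolic graph. There exist ε > 0 and β > 0 such that for all x, y ∈ X and every path x = x₀, x₁, …, x_n = y with d(x_i, x_{i+1}) = 1, one has ∑_{i=0}^{n−1} e^{−ε·d(x_i, géod(x,y))} ≥ β·d(x,y). -/
/-- The set of points on geodesics from `x` to `y` in a graph. -/
def geodSet {V : Type*} (Γ : SimpleGraph V) (x y : V) : Set V :=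
  {z : V | Γ.dist x z + Γ.dist z y = Γ.dist x y}

/-- The distance from `z` to the set `géod(x,y)`. -/
noncomputable def dGeod {V : Type*} (Γ : SimpleGraph V) (x y z : V) : ℕ :=
  sInf ((fun w => Γ.dist z w) '' geodSet Γ x y)

/-!
Fix a point `z` on a geodesic from `x` to `y`. The four-point condition makes `exp (-ε (u|v)_z)` an
`exp (εδ/2)`-quasi-ultrametric, so for `ε δ ≤ log 2` Frink's chain inequality bounds
`exp (-ε (x|y)_z) = 1` by twice its sum along the path. Since `(u|v)_z ≥ d(u, z) - 1` along an edge,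
each of the `d(x, y)` points `z` of one geodesic gives `∑ᵢ exp (-ε d(xᵢ, z)) ≥ 1 / (2 e^ε)`. Summing
over these points and using `2 d(xᵢ, z) ≥ d(xᵢ, géod(x, y)) + |d(x, xᵢ) - d(x, z)|`, the second term
is absorbed by a geometric series.
-/

open Finset Real
open scoped NNReal

section QuasiUltrametric

variable {X : Type*}

lemma ite_eq_zero_le_mul_max [DecidableEq X] {d : X → X → ℝ≥0} {K : ℝ≥0} (hK : 1 ≤ K)
    (hd : ∀ x y z, d x z ≤ K * max (d x y) (d y z)) (x y z : X) :
    (if x = z then 0 else d x z) ≤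
      K * max (if x = y then 0 else d x y) (if y = z then 0 else d y z) := by
  by_cases hxz : x = z
  · simp [hxz]
  rw [if_neg hxz]
  by_cases hxy : x = y
  · subst hxy
    simpa [hxz] using le_mul_of_one_le_left zero_le hK
  by_cases hyz : y = z
  · subst hyz
    simpa [hxy] using le_mul_of_one_le_left zero_le hK
  simpa [hxy, hyz] using hd x y z

/-- Frink's chain inequality. -/
theorem le_two_mul_sum_range_of_le_mul_max {d : X → X → ℝ≥0} (hcomm : ∀ x y, d x y = d y x)
    {K : ℝ≥0} (hK₁ : 1 ≤ K) (hK₂ : K ^ 2 ≤ 2) (hd : ∀ x y z, d x z ≤ K * max (d x y) (d y z))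
    (f : ℕ → X) {n : ℕ} (hf : f 0 ≠ f n) :
    (d (f 0) (f n) : ℝ) ≤ 2 * ∑ i ∈ range n, (d (f i) (f (i + 1)) : ℝ) := by
  classical
  -- `PseudoMetricSpace.ofPreNNDist` needs a vanishing diagonal.
  set d' : X → X → ℝ≥0 := fun x y => if x = y then 0 else d x y with hd'
  have hd'₃ : ∀ x y z, d' x z ≤ K * max (d' x y) (d' y z) := ite_eq_zero_le_mul_max hK₁ hd
  have hd'₄ : ∀ x₁ x₂ x₃ x₄, d' x₁ x₄ ≤ 2 * max (d' x₁ x₂) (max (d' x₂ x₃) (d' x₃ x₄)) := by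
    intro x₁ x₂ x₃ x₄
    calc d' x₁ x₄ ≤ K * max (d' x₁ x₂) (K * max (d' x₂ x₃) (d' x₃ x₄)) := by
          grw [← hd'₃ x₂ x₃ x₄]; exact hd'₃ x₁ x₂ x₄
      _ ≤ K * (K * max (d' x₁ x₂) (max (d' x₂ x₃) (d' x₃ x₄))) := by
          gcongr
          refine max_le ((le_max_left _ _).trans (le_mul_of_one_le_left zero_le hK₁)) ?_
          exact mul_le_mul_of_nonneg_left (le_max_right _ _) zero_le
      _ ≤ 2 * max (d' x₁ x₂) (max (d' x₂ x₃) (d' x₃ x₄)) := by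
          rw [← mul_assoc, ← sq]; gcongr
  have hd'_self : ∀ x, d' x x = 0 := fun x => if_pos rfl
  have hd'_comm : ∀ x y, d' x y = d' y x := by
    intro x y; simp only [hd', eq_comm (a := x), hcomm x y]
  let _ := PseudoMetricSpace.ofPreNNDist d' hd'_self hd'_comm
  calc (d (f 0) (f n) : ℝ) = d' (f 0) (f n) := by simp [hd', hf]
    _ ≤ 2 * dist (f 0) (f n) := PseudoMetricSpace.le_two_mul_dist_ofPreNNDist _ _ _ hd'₄ _ _
    _ ≤ 2 * ∑ i ∈ range n, dist (f i) (f (i + 1)) := by gcongr; exact dist_le_range_sum_dist f n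
    _ ≤ 2 * ∑ i ∈ range n, (d (f i) (f (i + 1)) : ℝ) := by
        gcongr with i
        refine (PseudoMetricSpace.dist_ofPreNNDist_le _ _ _ _ _).trans ?_
        simp only [hd']
        split_ifs <;> simp

end QuasiUltrametric

lemma hasSum_exp_neg_mul_abs_int {η : ℝ} (hη : 0 < η) :
    HasSum (fun j : ℤ => exp (-η * |(j : ℝ)|)) ((1 + exp (-η)) / (1 - exp (-η))) := by
  have hq₁ : exp (-η) < 1 := exp_lt_one_iff.2 (by linarith)
  have hpow : ∀ m : ℕ, exp (-η * m) = exp (-η) ^ m := fun m => by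
    rw [← exp_nat_mul]; ring_nf
  have hgeom := hasSum_geometric_of_lt_one (exp_pos (-η)).le hq₁
  have hpos : (fun m : ℕ => exp (-η * |((m : ℤ) : ℝ)|)) = fun m => exp (-η) ^ m := by
    ext m; rw [← hpow]; simp
  have hneg : (fun m : ℕ => exp (-η * |((-(m + 1) : ℤ) : ℝ)|)) =
      fun m => exp (-η) * exp (-η) ^ m := by
    ext m; rw [← pow_succ', ← hpow]; push_cast; rw [abs_neg, abs_of_nonneg (by positivity)]
  have h := HasSum.of_nat_of_neg_add_one (f := fun j : ℤ => exp (-η * |(j : ℝ)|))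
    (hpos ▸ hgeom) (hneg ▸ hgeom.mul_left (exp (-η)))
  convert h using 1
  field_simp [(sub_pos.2 hq₁).ne']

lemma sum_exp_neg_mul_abs_sub_le {η : ℝ} (hη : 0 < η) (a : ℕ) (s : Finset ℕ) :
    ∑ k ∈ s, exp (-η * |(a : ℝ) - k|) ≤ (1 + exp (-η)) / (1 - exp (-η)) := by
  have hinj : Set.InjOn (fun k : ℕ => (a : ℤ) - k) s := fun k _ l _ hkl => by
    simpa using hkl
  calc ∑ k ∈ s, exp (-η * |(a : ℝ) - k|)
      = ∑ j ∈ s.image (fun k : ℕ => (a : ℤ) - k), exp (-η * |(j : ℝ)|) := by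
        rw [sum_image hinj]; push_cast; rfl
    _ ≤ _ := sum_le_hasSum _ (fun _ _ => (exp_pos _).le) (hasSum_exp_neg_mul_abs_int hη)

namespace SimpleGraph

variable {V : Type*} {Γ : SimpleGraph V}

def FourPointCondition (Γ : SimpleGraph V) (δ : ℝ) : Prop :=
  ∀ a b c d : V, (Γ.dist a c : ℝ) + Γ.dist b d ≤
    max ((Γ.dist a d : ℝ) + Γ.dist b c) ((Γ.dist a b : ℝ) + Γ.dist c d) + δ

/-- The Gromov product `(u|v)_z` based at `z`. -/
noncomputable def gromovProduct (Γ : SimpleGraph V) (z u v : V) : ℝ :=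
  ((Γ.dist u z : ℝ) + Γ.dist v z - Γ.dist u v) / 2

lemma gromovProduct_comm (z u v : V) : Γ.gromovProduct z u v = Γ.gromovProduct z v u := by
  simp only [gromovProduct, Γ.dist_comm (u := u) (v := v), add_comm]

lemma gromovProduct_eq_zero_of_mem_geodSet {x y z : V} (hz : z ∈ geodSet Γ x y) :
    Γ.gromovProduct z x y = 0 := by
  have h : (Γ.dist x z : ℝ) + Γ.dist z y = Γ.dist x y := mod_cast hz
  rw [gromovProduct, Γ.dist_comm (u := y)]
  linarith

lemma Adj.dist_sub_one_le_gromovProduct (hconn : Γ.Connected) {u v : V} (h : Γ.Adj u v)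
    (z : V) : (Γ.dist u z : ℝ) - 1 ≤ Γ.gromovProduct z u v := by
  have huv : Γ.dist u v = 1 := dist_eq_one_iff_adj.2 h
  have htri : (Γ.dist u z : ℝ) ≤ Γ.dist u v + Γ.dist v z := mod_cast hconn.dist_triangle
  rw [gromovProduct, huv] at *
  push_cast at htri ⊢
  linarith

lemma FourPointCondition.min_gromovProduct_le {δ : ℝ} (h4 : Γ.FourPointCondition δ)
    (z u v w : V) :
    min (Γ.gromovProduct z u v) (Γ.gromovProduct z v w) ≤ Γ.gromovProduct z u w + δ / 2 := by
  have H := h4 u v w z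
  simp only [gromovProduct]
  rcases max_cases ((Γ.dist u z : ℝ) + Γ.dist v w) ((Γ.dist u v : ℝ) + Γ.dist w z) with
    ⟨hmax, -⟩ | ⟨hmax, -⟩ <;> rw [hmax] at H
  · exact (min_le_right _ _).trans (by linarith)
  · exact (min_le_left _ _).trans (by linarith)

lemma FourPointCondition.exp_neg_gromovProduct_le_two_mul_sum {δ ε : ℝ}
    (h4 : Γ.FourPointCondition δ) (hδ : 0 ≤ δ) (hε : 0 ≤ ε) (hεδ : ε * δ ≤ log 2) (z : V)
    (p : ℕ → V) {n : ℕ} (hp : p 0 ≠ p n) :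
    exp (-ε * Γ.gromovProduct z (p 0) (p n)) ≤
      2 * ∑ i ∈ range n, exp (-ε * Γ.gromovProduct z (p i) (p (i + 1))) := by
  let K : ℝ≥0 := (exp (ε * δ / 2)).toNNReal
  have hK₁ : 1 ≤ K := by
    simpa [K] using one_le_exp (by positivity : 0 ≤ ε * δ / 2)
  have hK₂ : K ^ 2 ≤ 2 := by
    rw [← NNReal.coe_le_coe, NNReal.coe_pow, Real.coe_toNNReal _ (exp_pos _).le]
    calc exp (ε * δ / 2) ^ 2 = exp (ε * δ) := by rw [← exp_nat_mul]; ring_nf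
      _ ≤ exp (log 2) := exp_le_exp.2 hεδ
      _ = 2 := exp_log two_pos
  have hquasi : ∀ u v w, exp (-ε * Γ.gromovProduct z u w) ≤
      exp (ε * δ / 2) * max (exp (-ε * Γ.gromovProduct z u v))
        (exp (-ε * Γ.gromovProduct z v w)) := by
    intro u v w
    have key : ∀ a, a ≤ Γ.gromovProduct z u w + δ / 2 →
        exp (-ε * Γ.gromovProduct z u w) ≤ exp (ε * δ / 2) * exp (-ε * a) := by
      intro a ha
      rw [← exp_add]
      exact exp_le_exp.2 (by nlinarith [mul_le_mul_of_nonneg_left ha hε])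
    rcases min_le_iff.1 (h4.min_gromovProduct_le z u v w) with h | h
    · exact (key _ h).trans (by gcongr; exact le_max_left _ _)
    · exact (key _ h).trans (by gcongr; exact le_max_right _ _)
  simpa [(exp_pos _).le] using le_two_mul_sum_range_of_le_mul_max
    (d := fun u v => (exp (-ε * Γ.gromovProduct z u v)).toNNReal)
    (fun u v => by rw [gromovProduct_comm]) hK₁ hK₂
    (fun u v w => by simpa [K, ← NNReal.coe_le_coe, (exp_pos _).le] using hquasi u v w) p hp

lemma Connected.exists_mem_geodSet_dist_eq (hconn : Γ.Connected) {x y : V} {k : ℕ}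
    (hk : k ≤ Γ.dist x y) : ∃ z ∈ geodSet Γ x y, Γ.dist x z = k := by
  obtain ⟨W, hW⟩ := hconn.exists_walk_length_eq_dist x y
  have h₁ : Γ.dist x (W.getVert k) ≤ k :=
    (dist_le (W.take k)).trans (by simp [Walk.take_length])
  have h₂ : Γ.dist (W.getVert k) y ≤ Γ.dist x y - k :=
    (dist_le (W.drop k)).trans (by simp [Walk.drop_length, hW])
  have h₃ : Γ.dist x y ≤ Γ.dist x (W.getVert k) + Γ.dist (W.getVert k) y := hconn.dist_triangle
  exact ⟨W.getVert k, by simp only [geodSet, Set.mem_ofPred_eq]; omega, by omega⟩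

lemma dGeod_le_dist {x y z : V} (hz : z ∈ geodSet Γ x y) (u : V) :
    dGeod Γ x y u ≤ Γ.dist u z :=
  Nat.sInf_le ⟨z, hz, rfl⟩

lemma Connected.abs_dist_sub_dist_le (hconn : Γ.Connected) (x u z : V) :
    |(Γ.dist x u : ℝ) - Γ.dist x z| ≤ Γ.dist u z := by
  have h₁ : (Γ.dist x z : ℝ) ≤ Γ.dist x u + Γ.dist u z := mod_cast hconn.dist_triangle
  have h₂ : (Γ.dist x u : ℝ) ≤ Γ.dist x z + Γ.dist z u := mod_cast hconn.dist_triangle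
  rw [Γ.dist_comm (u := z)] at h₂
  exact abs_sub_le_iff.2 ⟨by linarith, by linarith⟩

lemma Connected.exp_neg_dist_le_of_mem_geodSet (hconn : Γ.Connected) {x y z : V}
    (hz : z ∈ geodSet Γ x y) {ε : ℝ} (hε : 0 ≤ ε) (u : V) :
    exp (-ε * Γ.dist u z) ≤
      exp (-(ε / 2) * dGeod Γ x y u) * exp (-(ε / 2) * |(Γ.dist x u : ℝ) - Γ.dist x z|) := by
  have h₁ : (dGeod Γ x y u : ℝ) ≤ Γ.dist u z := mod_cast dGeod_le_dist hz u
  have h₂ := hconn.abs_dist_sub_dist_le x u z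
  rw [← exp_add]
  exact exp_le_exp.2 (by nlinarith)

lemma Connected.one_le_two_mul_exp_mul_sum_exp_neg_dist (hconn : Γ.Connected) {δ ε : ℝ}
    (h4 : Γ.FourPointCondition δ) (hδ : 0 ≤ δ) (hε : 0 ≤ ε) (hεδ : ε * δ ≤ log 2)
    {x y z : V} (hz : z ∈ geodSet Γ x y) (hxy : x ≠ y) {n : ℕ} {p : ℕ → V} (hp₀ : p 0 = x)
    (hpn : p n = y) (hadj : ∀ i < n, Γ.Adj (p i) (p (i + 1))) :
    1 ≤ 2 * exp ε * ∑ i ∈ range n, exp (-ε * Γ.dist (p i) z) := by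
  have hchain := h4.exp_neg_gromovProduct_le_two_mul_sum hδ hε hεδ z p (n := n) (by rwa [hp₀, hpn])
  rw [hp₀, hpn, gromovProduct_eq_zero_of_mem_geodSet hz, mul_zero, exp_zero] at hchain
  refine hchain.trans ?_
  rw [mul_assoc]
  gcongr 2 * ?_
  rw [mul_sum]
  gcongr with i hi
  rw [← exp_add]
  have := (hadj i (mem_range.1 hi)).dist_sub_one_le_gromovProduct hconn z
  exact exp_le_exp.2 (by nlinarith)

lemma Connected.dist_le_mul_sum_exp_neg_dGeod (hconn : Γ.Connected) {δ ε : ℝ}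
    (h4 : Γ.FourPointCondition δ) (hδ : 0 ≤ δ) (hε : 0 < ε) (hεδ : ε * δ ≤ log 2)
    {x y : V} {n : ℕ} {p : ℕ → V} (hp₀ : p 0 = x) (hpn : p n = y)
    (hadj : ∀ i < n, Γ.Adj (p i) (p (i + 1))) :
    (Γ.dist x y : ℝ) ≤ 2 * exp ε * ((1 + exp (-(ε / 2))) / (1 - exp (-(ε / 2)))) *
      ∑ i ∈ range n, exp (-(ε / 2) * dGeod Γ x y (p i)) := by
  by_cases hxy : x = y
  · subst hxy
    simp only [dist_self, Nat.cast_zero]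
    have : exp (-(ε / 2)) < 1 := exp_lt_one_iff.2 (by linarith)
    have : 0 < 1 - exp (-(ε / 2)) := by linarith
    positivity
  have : Nonempty V := ⟨x⟩
  choose! z hz hzx using fun k (hk : k ≤ Γ.dist x y) => hconn.exists_mem_geodSet_dist_eq hk
  set C := (1 + exp (-(ε / 2))) / (1 - exp (-(ε / 2)))
  calc (Γ.dist x y : ℝ) = ∑ k ∈ range (Γ.dist x y), (1 : ℝ) := by simp
    _ ≤ ∑ k ∈ range (Γ.dist x y),
          2 * exp ε * ∑ i ∈ range n, exp (-ε * Γ.dist (p i) (z k)) := by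
        gcongr with k hk
        exact hconn.one_le_two_mul_exp_mul_sum_exp_neg_dist h4 hδ hε.le hεδ
          (hz k (mem_range.1 hk).le) hxy hp₀ hpn hadj
    _ = 2 * exp ε * ∑ i ∈ range n, ∑ k ∈ range (Γ.dist x y),
          exp (-ε * Γ.dist (p i) (z k)) := by rw [← mul_sum, sum_comm]
    _ ≤ 2 * exp ε * ∑ i ∈ range n, exp (-(ε / 2) * dGeod Γ x y (p i)) * C := by
        gcongr with i
        calc ∑ k ∈ range (Γ.dist x y), exp (-ε * Γ.dist (p i) (z k))
            ≤ ∑ k ∈ range (Γ.dist x y), exp (-(ε / 2) * dGeod Γ x y (p i)) *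
                exp (-(ε / 2) * |(Γ.dist x (p i) : ℝ) - k|) := by
              gcongr with k hk
              have hk := (mem_range.1 hk).le
              simpa only [hzx k hk] using hconn.exp_neg_dist_le_of_mem_geodSet (hz k hk) hε.le (p i)
          _ ≤ exp (-(ε / 2) * dGeod Γ x y (p i)) * C := by
              rw [← mul_sum]
              gcongr
              exact sum_exp_neg_mul_abs_sub_le (by positivity) _ _
    _ = _ := by rw [← sum_mul]; ring

end SimpleGraph

theorem stmt11_general {V : Type*} (Γ : SimpleGraph V) (hconn : Γ.Connected)
    (hhyp : ∃ δ : ℝ, 0 ≤ δ ∧ ∀ a b c d : V,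
      (Γ.dist a c : ℝ) + Γ.dist b d ≤
        max ((Γ.dist a d : ℝ) + Γ.dist b c) ((Γ.dist a b : ℝ) + Γ.dist c d) + δ) :
    ∃ ε : ℝ, 0 < ε ∧ ∃ β : ℝ, 0 < β ∧
      ∀ (x y : V) (n : ℕ) (p : ℕ → V), p 0 = x → p n = y →
        (∀ i < n, Γ.Adj (p i) (p (i + 1))) →
        β * Γ.dist x y ≤
          ∑ i ∈ Finset.range n, Real.exp (-ε * dGeod Γ x y (p i)) := by
  obtain ⟨δ, hδ, h4⟩ := hhyp
  set ε := log 2 / (δ + 1)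
  have hε : 0 < ε := div_pos (log_pos one_lt_two) (by linarith)
  have hεδ : ε * δ ≤ log 2 := by
    rw [div_mul_eq_mul_div, div_le_iff₀ (by linarith)]
    nlinarith [log_pos one_lt_two]
  have hq : exp (-(ε / 2)) < 1 := exp_lt_one_iff.2 (by linarith)
  set M := 2 * exp ε * ((1 + exp (-(ε / 2))) / (1 - exp (-(ε / 2))))
  have hM : 0 < M := by
    have : 0 < 1 - exp (-(ε / 2)) := by linarith
    positivity
  refine ⟨ε / 2, by positivity, M⁻¹, inv_pos.2 hM, fun x y n p hp₀ hpn hadj => ?_⟩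
  rw [inv_mul_le_iff₀ hM]
  exact hconn.dist_le_mul_sum_exp_neg_dGeod h4 hδ hε hεδ hp₀ hpn hadj

/-- Proposition 2.6: in a good discrete hyperbolic space there are `ε, β > 0`
such that for any path from `x` to `y`, `∑ e^{-ε d(x_i, géod(x,y))} ≥ β d(x,y)`. -/
theorem stmt11 {V : Type*} (Γ : SimpleGraph V) (hconn : Γ.Connected)
    (hulf : ∃ N : ℕ, ∀ v : V, {u : V | Γ.Adj v u}.Finite ∧
      {u : V | Γ.Adj v u}.ncard ≤ N)
    (hhyp : ∃ δ : ℝ, 0 ≤ δ ∧ ∀ a b c d : V,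
      (Γ.dist a c : ℝ) + Γ.dist b d ≤
        max ((Γ.dist a d : ℝ) + Γ.dist b c) ((Γ.dist a b : ℝ) + Γ.dist c d) + δ) :
    ∃ ε : ℝ, 0 < ε ∧ ∃ β : ℝ, 0 < β ∧
      ∀ (x y : V) (n : ℕ) (p : ℕ → V), p 0 = x → p n = y →
        (∀ i < n, Γ.Adj (p i) (p (i + 1))) →
        β * Γ.dist x y ≤
          ∑ i ∈ Finset.range n, Real.exp (-ε * dGeod Γ x y (p i)) :=
  stmt11_general Γ hconn hhyp
end

section
/- Let (X,d) be a good discrete hyperbolic space, and let ε, β > 0 be as in the path-sum lower bound (Proposition 2.6). Then for every chain c = ∑ c(e)·ē with ∂c = δ_y − δ_x, one has ∑_{e/∼} |c(e)|·e^{−ε·d(e, géod(x,y))} ≥ β·d(x,y), where d(e, géod(x,y)) = min(d(e⁻, géod(x,y)), d(e⁺, géod(x,y))). -/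
/-!
Weak LP duality. Let `φ` be the weighted distance from `x`, the infimum of the `w`-costs of
walks starting at `x`; it is `w`-Lipschitz along edges, is nonpositive at `x` and is at least the
lower bound `B` on path costs at `y`. Pairing the chain with the coboundary of `φ` gives
`∑ₑ c(e) (φ(e⁺) - φ(e⁻)) = 2 (φ(y) - φ(x)) ≥ 2B`, while the left side is at most
`∑ₑ |c(e)| w(e)`.
-/

section Chains

variable {V : Type*}

lemma bnd_sum_mul (c : (V × V) →₀ ℝ) (φ : V → ℝ) :
    (bnd c).sum (fun v a => a * φ v) = c.sum fun e a => a * φ e.2 :=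
  Finsupp.sum_mapDomain_index (fun _ => zero_mul _) fun _ _ _ => add_mul _ _ _

lemma sum_mul_fst_eq_neg_of_antisymm {c : (V × V) →₀ ℝ}
    (hanti : ∀ u v : V, c (u, v) = -c (v, u)) (φ : V → ℝ) :
    (c.sum fun e a => a * φ e.1) = -c.sum fun e a => a * φ e.2 := by
  have hanti' : ∀ e : V × V, c e.swap = -c e := fun e => hanti e.2 e.1
  rw [Finsupp.sum, Finsupp.sum, ← Finset.sum_neg_distrib]
  exact Finset.sum_equiv (Equiv.prodComm V V) (fun e => by simp [hanti'])
    fun e _ => by simp [hanti']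

theorem sub_le_sum_abs_mul_div_two_of_bnd {c : (V × V) →₀ ℝ} {x y : V} {φ : V → ℝ}
    {w : V × V → ℝ} (hanti : ∀ u v : V, c (u, v) = -c (v, u))
    (hbnd : bnd c = Finsupp.single y 1 - Finsupp.single x 1)
    (hφ : ∀ e ∈ c.support, |φ e.2 - φ e.1| ≤ w e) :
    φ y - φ x ≤ (c.sum fun e a => |a| * w e) / 2 := by
  have hpair : (bnd c).sum (fun v a => a * φ v) = φ y - φ x := by
    rw [hbnd, Finsupp.sum_sub_index (fun _ _ _ => sub_mul _ _ _),
      Finsupp.sum_single_index (zero_mul _), Finsupp.sum_single_index (zero_mul _),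
      one_mul, one_mul]
  have hcoboundary : (c.sum fun e a => a * (φ e.2 - φ e.1)) = 2 * (φ y - φ x) := by
    simp only [mul_sub, Finsupp.sum_sub, sum_mul_fst_eq_neg_of_antisymm hanti, ← bnd_sum_mul,
      hpair]
    ring
  suffices (c.sum fun e a => a * (φ e.2 - φ e.1)) ≤ c.sum fun e a => |a| * w e by linarith
  refine Finset.sum_le_sum fun e he => ?_
  calc c e * (φ e.2 - φ e.1) ≤ |c e| * |φ e.2 - φ e.1| :=
        (le_abs_self _).trans (abs_mul _ _).le
    _ ≤ |c e| * w e := mul_le_mul_of_nonneg_left (hφ e he) (abs_nonneg _)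

end Chains

namespace SimpleGraph

variable {V : Type*} {Γ : SimpleGraph V} (w : V × V → ℝ)

def Walk.cost {u v : V} (q : Γ.Walk u v) : ℝ :=
  (q.darts.map fun d => w d.toProd).sum

lemma Walk.cost_concat {u v v' : V} (q : Γ.Walk u v) (h : Γ.Adj v v') :
    (q.concat h).cost w = q.cost w + w (v, v') := by
  simp [Walk.cost, Walk.darts_concat]

lemma Walk.cost_nonneg (hw : ∀ e, 0 ≤ w e) {u v : V} (q : Γ.Walk u v) : 0 ≤ q.cost w :=
  List.sum_nonneg fun _ hd => by
    obtain ⟨d, -, rfl⟩ := List.mem_map.1 hd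
    exact hw _

lemma Walk.cost_eq_sum_getVert {u v : V} (q : Γ.Walk u v) :
    q.cost w = ∑ i ∈ Finset.range q.length, w (q.getVert i, q.getVert (i + 1)) := by
  induction q with
  | nil => rfl
  | cons h q ih =>
    rw [Walk.length_cons, Finset.sum_range_succ']
    simp only [Walk.getVert_cons_succ]
    rw [← ih, Walk.getVert_zero, Walk.getVert_zero, add_comm]
    rfl

-- `⨅` on `ℝ` is junk (`0`) without walks or when costs are unbounded below, whence the
-- reachability and nonnegativity hypotheses below.
noncomputable def costDist (x v : V) : ℝ :=
  ⨅ q : Γ.Walk x v, q.cost w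

variable {w}

lemma costDist_self_nonpos (Γ : SimpleGraph V) (hw : ∀ e, 0 ≤ w e) (x : V) :
    Γ.costDist w x x ≤ 0 :=
  ciInf_le ⟨0, Set.forall_mem_range.2 (Walk.cost_nonneg w hw)⟩ Walk.nil

lemma le_costDist {x v : V} {B : ℝ} (hreach : Γ.Reachable x v)
    (hB : ∀ q : Γ.Walk x v, B ≤ q.cost w) : B ≤ Γ.costDist w x v :=
  have : Nonempty (Γ.Walk x _) := hreach
  le_ciInf hB

lemma costDist_le_add_of_adj (hw : ∀ e, 0 ≤ w e) {x u v : V} (hreach : Γ.Reachable x u)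
    (h : Γ.Adj u v) : Γ.costDist w x v ≤ Γ.costDist w x u + w (u, v) := by
  have : Nonempty (Γ.Walk x _) := hreach
  suffices Γ.costDist w x v - w (u, v) ≤ Γ.costDist w x u by linarith
  refine le_ciInf fun q => ?_
  have := ciInf_le ⟨0, Set.forall_mem_range.2 (Walk.cost_nonneg w hw)⟩ (q.concat h)
  rw [Walk.cost_concat] at this
  exact sub_le_iff_le_add.2 this

lemma abs_costDist_sub_le (hconn : Γ.Connected) (hw : ∀ e, 0 ≤ w e)
    (hsymm : ∀ u v, w (u, v) = w (v, u)) (x : V) {u v : V} (h : Γ.Adj u v) :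
    |Γ.costDist w x v - Γ.costDist w x u| ≤ w (u, v) := by
  have huv := costDist_le_add_of_adj hw (hconn x u) h
  have hvu := costDist_le_add_of_adj hw (hconn x v) h.symm
  rw [abs_sub_le_iff]
  constructor <;> linarith [hsymm u v]

theorem le_sum_abs_mul_div_two_of_le_cost (hconn : Γ.Connected) (hw : ∀ e, 0 ≤ w e)
    (hsymm : ∀ u v, w (u, v) = w (v, u)) {x y : V} {B : ℝ}
    (hB : ∀ q : Γ.Walk x y, B ≤ q.cost w) {c : (V × V) →₀ ℝ}
    (hanti : ∀ u v : V, c (u, v) = -c (v, u)) (hsupp : ∀ e ∈ c.support, Γ.Adj e.1 e.2)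
    (hbnd : bnd c = Finsupp.single y 1 - Finsupp.single x 1) :
    B ≤ (c.sum fun e a => |a| * w e) / 2 := by
  have hduality := sub_le_sum_abs_mul_div_two_of_bnd (w := w) hanti hbnd fun e he =>
    abs_costDist_sub_le hconn hw hsymm x (hsupp e he)
  linarith [le_costDist (hconn x y) hB, costDist_self_nonpos Γ hw x]

end SimpleGraph

theorem stmt12_general {V : Type*} (Γ : SimpleGraph V) (hconn : Γ.Connected)
    (ε β : ℝ) (hε : 0 < ε)
    (hpath : ∀ (x y : V) (n : ℕ) (p : ℕ → V), p 0 = x → p n = y →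
      (∀ i < n, Γ.Adj (p i) (p (i + 1))) →
      β * Γ.dist x y ≤
        ∑ i ∈ Finset.range n, Real.exp (-ε * dGeod Γ x y (p i)))
    (x y : V) (c : (V × V) →₀ ℝ)
    (hanti : ∀ u v : V, c (u, v) = -c (v, u))
    (hsupp : ∀ e ∈ c.support, Γ.Adj e.1 e.2)
    (hbnd : bnd c = Finsupp.single y 1 - Finsupp.single x 1) :
    β * Γ.dist x y ≤
      (c.sum fun e a => |a| *
        Real.exp (-ε * min (dGeod Γ x y e.1) (dGeod Γ x y e.2))) / 2 := by
  refine Γ.le_sum_abs_mul_div_two_of_le_cost hconn (fun _ => (Real.exp_pos _).le)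
    (fun u v => by rw [min_comm]) (fun q => ?_) hanti hsupp hbnd
  rw [SimpleGraph.Walk.cost_eq_sum_getVert]
  refine (hpath x y _ _ q.getVert_zero q.getVert_length fun i hi => q.adj_getVert_succ hi).trans
    (Finset.sum_le_sum fun i _ => Real.exp_le_exp.2 (mul_le_mul_of_nonpos_left ?_ (by linarith)))
  exact_mod_cast min_le_left _ _

/-- Corollaire 2.7: assuming the path-sum lower bound (Proposition 2.6) with
constants `ε, β > 0`, every chain `c` with boundary `δ_y - δ_x` satisfies
`∑_{e/∼} |c(e)| e^{-ε d(e, géod(x,y))} ≥ β d(x,y)`, where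
`d(e, géod(x,y)) = min(d(e⁻, géod(x,y)), d(e⁺, géod(x,y)))` (the sum over
unoriented edges is half the sum over oriented pairs). -/
theorem stmt12 {V : Type*} (Γ : SimpleGraph V) (hconn : Γ.Connected)
    (ε β : ℝ) (hε : 0 < ε) (hβ : 0 < β)
    (hpath : ∀ (x y : V) (n : ℕ) (p : ℕ → V), p 0 = x → p n = y →
      (∀ i < n, Γ.Adj (p i) (p (i + 1))) →
      β * Γ.dist x y ≤
        ∑ i ∈ Finset.range n, Real.exp (-ε * dGeod Γ x y (p i)))
    (x y : V) (c : (V × V) →₀ ℝ)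
    (hanti : ∀ u v : V, c (u, v) = -c (v, u))
    (hsupp : ∀ e ∈ c.support, Γ.Adj e.1 e.2)
    (hbnd : bnd c = Finsupp.single y 1 - Finsupp.single x 1) :
    β * Γ.dist x y ≤
      (c.sum fun e a => |a| *
        Real.exp (-ε * min (dGeod Γ x y e.1) (dGeod Γ x y e.2))) / 2 :=
  stmt12_general Γ hconn ε β hε hpath x y c hanti hsupp hbnd
end

section
/- Let (X,d) be a δ-hyperbolic geodesic metric space with δ > 0, and let t_k, t_{k+1} be points on a geodesic with D = d(t_k, t_{k+1}) satisfying D > 3δ + 1. Let m_k be a midpoint of {t_k, t_{k+1}} (a point z on a geodesic from t_k to t_{k+1} with |d(t_k,z) − d(t_{k+1},z)| ≤ 1). Suppose x is a point such that t_k is a closest point of géod(x,y) to x and t_{k+1} is a closest point to x'. Then m_k ∈ Δ''-géod(x, x') with Δ'' = 3(D+1)/2 + 2δ. -/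
set_option maxHeartbeats 1000000 in
private lemma gromov_aux {X : Type*} [MetricSpace X] (δ : ℝ) (hδpos : 0 < δ)
    (hδ : ∀ a b c d : X,
      dist a c + dist b d ≤ max (dist a d + dist b c) (dist a b + dist c d) + δ)
    (hgeod : ∀ u v : X, ∀ r : ℝ, 0 ≤ r → r ≤ dist u v →
      ∃ z : X, dist u z = r ∧ dist z v = dist u v - r)
    (a b x x' tk tk1 : X)
    (hDb : 3 * δ + 1 < dist tk tk1)
    (htk : dist a tk + dist tk b = dist a b)
    (htk1 : dist a tk1 + dist tk1 b = dist a b)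
    (hnear : ∀ t : X, dist a t + dist t b = dist a b → dist x tk ≤ dist x t)
    (hnear' : ∀ t : X, dist a t + dist t b = dist a b → dist x' tk1 ≤ dist x' t)
    (hle : dist a tk ≤ dist a tk1) :
    dist x tk + dist x' tk1 + dist tk tk1
      ≤ dist x x' + (3 * (dist tk tk1 + 1) / 2 + 2 * δ) := by
  -- Notation: A = d(a,tk), B = d(a,tk1), L = B - A, D = d(tk,tk1).
  have hLD : dist a tk1 - dist a tk ≤ dist tk tk1 := by
    have := dist_triangle a tk tk1; linarith
  -- D ≤ L + δ (points on a geodesic are ordered up to δ)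
  have he : dist tk tk1 ≤ (dist a tk1 - dist a tk) + δ := by
    have h4 := hδ a tk b tk1
    have c1 : dist b tk1 = dist tk1 b := dist_comm b tk1
    have m1 : dist a tk1 + dist tk b ≤ dist a b + (dist a tk1 - dist a tk) := by linarith
    have m2 : dist a tk + dist b tk1 ≤ dist a b + (dist a tk1 - dist a tk) := by linarith
    have hm := max_le m1 m2
    linarith
  have hBab : dist a tk1 ≤ dist a b := by
    have : (0:ℝ) ≤ dist tk1 b := dist_nonneg
    linarith
  rcases le_or_gt (δ / 2) (dist tk tk1 - (dist a tk1 - dist a tk)) with hcase | hcase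
  · -- CASE (i): e = D - L ≥ δ/2.  Use nesting towards tk1 and tk, then cross.
    -- r := 2δ - e + 1/2
    have hrpos : (0:ℝ) ≤ 2 * δ - (dist tk tk1 - (dist a tk1 - dist a tk)) + 1 / 2 := by
      linarith
    have hrL : 2 * δ - (dist tk tk1 - (dist a tk1 - dist a tk)) + 1 / 2
        ≤ dist a tk1 - dist a tk := by linarith
    have hLnn : (0:ℝ) ≤ dist a tk1 - dist a tk := by linarith
    have hLb : dist a tk1 - dist a tk ≤ dist tk b := by linarith
    obtain ⟨t, ht1, ht2⟩ := hgeod tk b (dist a tk1 - dist a tk) hLnn hLb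
    obtain ⟨w, hw1, hw2⟩ :=
      hgeod tk t (2 * δ - (dist tk tk1 - (dist a tk1 - dist a tk)) + 1 / 2) hrpos
        (by rw [ht1]; exact hrL)
    have hwt : dist w t
        = (dist a tk1 - dist a tk) - (2 * δ - (dist tk tk1 - (dist a tk1 - dist a tk)) + 1 / 2) := by
      rw [hw2, ht1]
    have haw_le : dist a w
        ≤ dist a tk + (2 * δ - (dist tk tk1 - (dist a tk1 - dist a tk)) + 1 / 2) := by
      have := dist_triangle a tk w; linarith [hw1]
    have hwb_le : dist w b
        ≤ dist tk b - (2 * δ - (dist tk tk1 - (dist a tk1 - dist a tk)) + 1 / 2) := by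
      have := dist_triangle w t b; linarith [hwt, ht2]
    have hawb : dist a w + dist w b = dist a b := by
      have h5 := dist_triangle a w b
      have h6 : dist a w + dist w b ≤ dist a b := by linarith
      linarith
    have hxw : dist x tk ≤ dist x w := hnear w hawb
    have hwtk1 : dist w tk1
        ≤ (dist a tk1 - dist a tk)
          - (2 * δ - (dist tk tk1 - (dist a tk1 - dist a tk)) + 1 / 2) + δ := by
      have h6 := hδ w a tk1 b
      have c2 : dist w a = dist a w := dist_comm w a
      have m1 : dist w b + dist a tk1
          ≤ dist a b + ((dist a tk1 - dist a tk)
            - (2 * δ - (dist tk tk1 - (dist a tk1 - dist a tk)) + 1 / 2)) := by linarith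
      have m2 : dist w a + dist tk1 b
          ≤ dist a b + ((dist a tk1 - dist a tk)
            - (2 * δ - (dist tk tk1 - (dist a tk1 - dist a tk)) + 1 / 2)) := by linarith
      have hm := max_le m1 m2
      linarith
    have h7 := hδ x tk w tk1
    have h8 : dist x tk + dist tk tk1 - δ
        ≤ max (dist x tk1 + dist tk w) (dist x tk + dist w tk1) := by
      linarith
    have hx1 : dist x tk + dist tk tk1
        - (2 * δ - (dist tk tk1 - (dist a tk1 - dist a tk)) + 1 / 2) - δ ≤ dist x tk1 := by
      rcases le_max_iff.mp h8 with h | h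
      · linarith [hw1]
      · exfalso; linarith
    -- symmetric construction on the x' side
    have hLa : dist a tk1 - dist a tk ≤ dist tk1 a := by
      have c3 : dist tk1 a = dist a tk1 := dist_comm tk1 a
      have : (0:ℝ) ≤ dist a tk := dist_nonneg
      linarith
    obtain ⟨t', ht'1, ht'2⟩ := hgeod tk1 a (dist a tk1 - dist a tk) hLnn hLa
    obtain ⟨w', hw'1, hw'2⟩ :=
      hgeod tk1 t' (2 * δ - (dist tk tk1 - (dist a tk1 - dist a tk)) + 1 / 2) hrpos
        (by rw [ht'1]; exact hrL)
    have hw't : dist w' t'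
        = (dist a tk1 - dist a tk) - (2 * δ - (dist tk tk1 - (dist a tk1 - dist a tk)) + 1 / 2) := by
      rw [hw'2, ht'1]
    have haw'_le : dist a w'
        ≤ dist a tk1 - (2 * δ - (dist tk tk1 - (dist a tk1 - dist a tk)) + 1 / 2) := by
      have h9 := dist_triangle a t' w'
      have c3 : dist tk1 a = dist a tk1 := dist_comm tk1 a
      have c4 : dist a t' = dist t' a := dist_comm a t'
      have c5 : dist t' w' = dist w' t' := dist_comm t' w'
      linarith [ht'2]
    have hw'b_le : dist w' b
        ≤ dist tk1 b + (2 * δ - (dist tk tk1 - (dist a tk1 - dist a tk)) + 1 / 2) := by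
      have := dist_triangle w' tk1 b
      have c6 : dist w' tk1 = dist tk1 w' := dist_comm w' tk1
      linarith [hw'1]
    have haw'b : dist a w' + dist w' b = dist a b := by
      have h5 := dist_triangle a w' b
      have h6 : dist a w' + dist w' b ≤ dist a b := by linarith
      linarith
    have hx'w' : dist x' tk1 ≤ dist x' w' := hnear' w' haw'b
    have hw'tk : dist w' tk
        ≤ (dist a tk1 - dist a tk)
          - (2 * δ - (dist tk tk1 - (dist a tk1 - dist a tk)) + 1 / 2) + δ := by
      have h10 := hδ w' a tk b
      have c7 : dist w' a = dist a w' := dist_comm w' a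
      have m1 : dist w' b + dist a tk
          ≤ dist a b + ((dist a tk1 - dist a tk)
            - (2 * δ - (dist tk tk1 - (dist a tk1 - dist a tk)) + 1 / 2)) := by linarith
      have m2 : dist w' a + dist tk b
          ≤ dist a b + ((dist a tk1 - dist a tk)
            - (2 * δ - (dist tk tk1 - (dist a tk1 - dist a tk)) + 1 / 2)) := by linarith
      have hm := max_le m1 m2
      linarith
    have h11 := hδ x' tk1 w' tk
    have c8 : dist tk1 tk = dist tk tk1 := dist_comm tk1 tk
    have h12 : dist x' tk1 + dist tk tk1 - δ
        ≤ max (dist x' tk + dist tk1 w') (dist x' tk1 + dist w' tk) := by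
      linarith
    have hx2 : dist x' tk1 + dist tk tk1
        - (2 * δ - (dist tk tk1 - (dist a tk1 - dist a tk)) + 1 / 2) - δ ≤ dist x' tk := by
      rcases le_max_iff.mp h12 with h | h
      · linarith [hw'1]
      · exfalso; linarith
    -- crossing four-point inequality
    have h13 := hδ x x' tk1 tk
    have h14 : dist x tk + dist x' tk1 + 2 * dist tk tk1
        - 2 * (2 * δ - (dist tk tk1 - (dist a tk1 - dist a tk)) + 1 / 2) - 3 * δ
        ≤ max (dist x tk + dist x' tk1) (dist x x' + dist tk1 tk) := by
      linarith [h13, hx1, hx2]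
    rcases le_max_iff.mp h14 with h | h
    · exfalso; linarith [h, hcase, hDb, hδpos]
    · linarith [h, c8, hcase, hDb, hδpos]
  · -- CASE (ii): e = D - L < δ/2.  Use nesting towards b and a, then cross.
    have hLlow : 5 / 2 * δ + 1 < dist a tk1 - dist a tk := by linarith
    have hrpos : (0:ℝ) ≤ δ + 1 / 2 := by linarith
    have hrb : δ + 1 / 2 ≤ dist tk b := by linarith
    obtain ⟨w, hw1, hw2⟩ := hgeod tk b (δ + 1 / 2) hrpos hrb
    have hawb : dist a w + dist w b = dist a b := by
      have h5 := dist_triangle a w b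
      have h6 : dist a w ≤ dist a tk + (δ + 1 / 2) := by
        have := dist_triangle a tk w; linarith [hw1]
      have h7 : dist a w + dist w b ≤ dist a b := by linarith [hw2]
      linarith
    have hxw : dist x tk ≤ dist x w := hnear w hawb
    have h7 := hδ x tk w b
    have h8 : dist x tk + dist tk b - δ
        ≤ max (dist x b + dist tk w) (dist x tk + dist w b) := by
      linarith
    have hxb : dist x tk + dist tk b - (δ + 1 / 2) - δ ≤ dist x b := by
      rcases le_max_iff.mp h8 with h | h
      · linarith [hw1]
      · exfalso; linarith [hw2]
    have hra : δ + 1 / 2 ≤ dist tk1 a := by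
      have c3 : dist tk1 a = dist a tk1 := dist_comm tk1 a
      have : (0:ℝ) ≤ dist a tk := dist_nonneg
      linarith
    obtain ⟨w', hw'1, hw'2⟩ := hgeod tk1 a (δ + 1 / 2) hrpos hra
    have c3 : dist tk1 a = dist a tk1 := dist_comm tk1 a
    have haw'b : dist a w' + dist w' b = dist a b := by
      have h5 := dist_triangle a w' b
      have c4 : dist a w' = dist w' a := dist_comm a w'
      have h6 : dist w' b ≤ dist tk1 b + (δ + 1 / 2) := by
        have := dist_triangle w' tk1 b
        have c5 : dist w' tk1 = dist tk1 w' := dist_comm w' tk1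
        linarith [hw'1]
      have h7 : dist a w' + dist w' b ≤ dist a b := by linarith [hw'2]
      linarith
    have hx'w' : dist x' tk1 ≤ dist x' w' := hnear' w' haw'b
    have h9 := hδ x' tk1 w' a
    have h10 : dist x' tk1 + dist tk1 a - δ
        ≤ max (dist x' a + dist tk1 w') (dist x' tk1 + dist w' a) := by
      linarith
    have hx'a : dist x' tk1 + dist tk1 a - (δ + 1 / 2) - δ ≤ dist x' a := by
      rcases le_max_iff.mp h10 with h | h
      · linarith [hw'1]
      · exfalso; linarith [hw'2]
    -- crossing four-point inequality through the endpoints a and b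
    have h11 := hδ x x' b a
    have hxa : dist x a ≤ dist x tk + dist a tk := by
      have h := dist_triangle x tk a
      have c5 : dist tk a = dist a tk := dist_comm tk a
      linarith
    have hx'b : dist x' b ≤ dist x' tk1 + dist tk1 b := dist_triangle x' tk1 b
    have cba : dist b a = dist a b := dist_comm b a
    have h12 : (dist x tk + dist tk b - (δ + 1 / 2) - δ)
          + (dist x' tk1 + dist tk1 a - (δ + 1 / 2) - δ) - δ
        ≤ max (dist x a + dist x' b) (dist x x' + dist b a) := by
      linarith
    rcases le_max_iff.mp h12 with h | h
    · exfalso; linarith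
    · linarith

/-- Midpoints of far-apart nearest-point projections lie on quasi-geodesics
(the three applications of the nesting lemma in the proof of Proposition 2.6). -/
theorem stmt19 {X : Type*} [MetricSpace X] (δ : ℝ) (hδpos : 0 < δ)
    (hδ : ∀ a b c d : X,
      dist a c + dist b d ≤ max (dist a d + dist b c) (dist a b + dist c d) + δ)
    (hgeod : ∀ u v : X, ∀ r : ℝ, 0 ≤ r → r ≤ dist u v →
      ∃ z : X, dist u z = r ∧ dist z v = dist u v - r)
    (a b : X) (x x' tk tk1 mk : X) (D : ℝ)
    (hD : D = dist tk tk1) (hDbig : 3 * δ + 1 < D)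
    (htk : dist a tk + dist tk b = dist a b)
    (htk1 : dist a tk1 + dist tk1 b = dist a b)
    (hmid₁ : dist tk mk + dist mk tk1 = dist tk tk1)
    (hmid₂ : |dist tk mk - dist tk1 mk| ≤ 1)
    (hnear : ∀ t : X, dist a t + dist t b = dist a b → dist x tk ≤ dist x t)
    (hnear' : ∀ t : X, dist a t + dist t b = dist a b → dist x' tk1 ≤ dist x' t) :
    dist x mk + dist mk x' ≤ dist x x' + (3 * (D + 1) / 2 + 2 * δ) := by
  have hDb : 3 * δ + 1 < dist tk tk1 := by rw [← hD]; exact hDbig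
  have key : dist x tk + dist x' tk1 + dist tk tk1
      ≤ dist x x' + (3 * (dist tk tk1 + 1) / 2 + 2 * δ) := by
    rcases le_total (dist a tk) (dist a tk1) with hle | hle
    · exact gromov_aux δ hδpos hδ hgeod a b x x' tk tk1 hDb htk htk1 hnear hnear' hle
    · have htk' : dist b tk + dist tk a = dist b a := by
        rw [dist_comm b tk, dist_comm tk a, dist_comm b a]; linarith
      have htk1' : dist b tk1 + dist tk1 a = dist b a := by
        rw [dist_comm b tk1, dist_comm tk1 a, dist_comm b a]; linarith
      have hnear2 : ∀ t : X, dist b t + dist t a = dist b a → dist x tk ≤ dist x t := by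
        intro t ht
        exact hnear t (by rw [dist_comm a t, dist_comm t b, dist_comm a b]; linarith)
      have hnear2' : ∀ t : X, dist b t + dist t a = dist b a → dist x' tk1 ≤ dist x' t := by
        intro t ht
        exact hnear' t (by rw [dist_comm a t, dist_comm t b, dist_comm a b]; linarith)
      have hle' : dist b tk ≤ dist b tk1 := by
        have c1 : dist b tk = dist tk b := dist_comm b tk
        have c2 : dist b tk1 = dist tk1 b := dist_comm b tk1
        linarith
      exact gromov_aux δ hδpos hδ hgeod b a x x' tk tk1 hDb htk' htk1' hnear2 hnear2' hle'
  have t1 : dist x mk ≤ dist x tk + dist tk mk := dist_triangle x tk mk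
  have t2 : dist mk x' ≤ dist mk tk1 + dist tk1 x' := dist_triangle mk tk1 x'
  have c1 : dist tk1 x' = dist x' tk1 := dist_comm tk1 x'
  linarith
end
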